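/- arXiv:0801.0556 — 5 statements merged into one kernel-verified Lean document; each statement's English description precedes it below -/
import Mathlib

section
/- Let M be a square matrix with nonnegative integer entries indexed by a finite alphabet A, such that no column of M is zero. Then there exist positive integers p ≥ 1, q ≥ 0, l ≥ q+1 and a partition {A_1, ..., A_l} of A such that M^p, in block form with respect to this partition, is lower block-triangular, the diagonal blocks M_i for 1 ≤ i ≤ q are primitive or zero, the diagonal blocks M_i for q+1 ≤ i ≤ l are primitive, the off-diagonal blocks M_{i,j} with both i,j > q are zero, and for every 1 ≤ i ≤ q there exists j with i+1 ≤ j ≤ l such that the block M_{i,j} (the block in row-group A_j, column-group A_i, i.e., recording letters of A_j produced from A_i) is nonzero. -/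
/-!
The supports of the powers of `M` form an eventually periodic sequence, so some power `E = M ^ p`
has idempotent support: the relation "`x` produces `y` under `E`" is transitive. The blocks are the
classes of its reflexive closure, ranked along a linear extension of the induced order with the
maximal (closed) classes last. By transitivity a diagonal block is entrywise positive as soon as
one of its entries is; a closed class receives the nonzero column of each of its letters, and a
non-closed class has an edge into a strictly later class.
-/

/-- A nonnegative matrix is primitive if some power has all entries strictly positive. -/
def MatPrimitive {n : Type*} [Fintype n] [DecidableEq n] (M : Matrix n n ℕ) : Prop :=
  ∃ k, 0 < k ∧ ∀ i j, 0 < (M ^ k) i j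

open Function Relation

section Rank

variable {α β : Type*}

theorem Fintype.exists_surjective_fin_le_iff [Fintype α] [LinearOrder β] (f : α → β) :
    ∃ (l : ℕ) (P : α → Fin l), Surjective P ∧ ∀ x y, P x ≤ P y ↔ f x ≤ f y := by
  classical
  let e := (Finset.univ.image f).orderIsoOfFin rfl
  refine ⟨_, fun x ↦ e.symm ⟨f x, Finset.mem_image_of_mem f (Finset.mem_univ x)⟩,
    fun i ↦ ?_, fun x y ↦ ?_⟩
  · obtain ⟨x, -, hx⟩ := Finset.mem_image.mp (e i).2
    exact ⟨x, by simp [hx]⟩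
  · simp

variable [Preorder α]

open Classical in
noncomputable def maxLastKey (x : α) :
    Bool ×ₗ LinearExtension (Antisymmetrization α (· ≤ ·)) :=
  toLex (decide (IsMax x), toLinearExtension (toAntisymmetrization (· ≤ ·) x))

theorem maxLastKey_strictMono : StrictMono (maxLastKey (α := α)) := by
  intro x y hxy
  have hx : ¬IsMax x := not_isMax_of_lt hxy
  by_cases hy : IsMax y
  · exact Prod.Lex.toLex_lt_toLex.mpr (Or.inl (by simp [hx, hy]))
  · refine Prod.Lex.toLex_lt_toLex.mpr (Or.inr ⟨by simp [hx, hy], ?_⟩)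
    exact toLinearExtension.monotone.strictMono_of_injective (fun _ _ h ↦ h)
      (toAntisymmetrization_lt_toAntisymmetrization_iff.mpr hxy)

theorem maxLastKey_eq_iff {x y : α} :
    maxLastKey x = maxLastKey y ↔ AntisymmRel (· ≤ ·) x y := by
  constructor
  · intro h
    have h' : toAntisymmetrization (α := α) (· ≤ ·) x = toAntisymmetrization (· ≤ ·) y :=
      congrArg (fun k ↦ (ofLex k).2) h
    simpa [le_antisymm_iff, AntisymmRel] using h'
  · intro h
    have hmax : IsMax x ↔ IsMax y := ⟨fun hx ↦ hx.mono h.1, fun hy ↦ hy.mono h.2⟩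
    simp only [maxLastKey, toLex_inj, Prod.mk.injEq]
    exact ⟨decide_eq_decide.mpr hmax, congrArg _ <| le_antisymm
      (toAntisymmetrization_le_toAntisymmetrization_iff.mpr h.1)
      (toAntisymmetrization_le_toAntisymmetrization_iff.mpr h.2)⟩

theorem IsMax.of_maxLastKey_le {x y : α} (hx : IsMax x) (h : maxLastKey x ≤ maxLastKey y) :
    IsMax y := by
  classical
  by_contra hy
  exact absurd (Prod.Lex.monotone_fst _ _ h) (by simp [maxLastKey, hx, hy])

theorem Fintype.exists_fin_rank_maxLast [Fintype α] [Nonempty α] :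
    ∃ (l q : ℕ) (P : α → Fin l), Surjective P ∧ q < l ∧ Monotone P ∧ StrictMono P ∧
      (∀ x y, P x = P y ↔ AntisymmRel (· ≤ ·) x y) ∧ ∀ x, q ≤ (P x : ℕ) ↔ IsMax x := by
  classical
  obtain ⟨l, P, hsurj, hP⟩ := Fintype.exists_surjective_fin_le_iff (maxLastKey (α := α))
  have hPlt (x y : α) : P x < P y ↔ maxLastKey x < maxLastKey y := by
    rw [lt_iff_le_not_ge, lt_iff_le_not_ge, hP, hP]
  have hPeq (x y : α) : P x = P y ↔ AntisymmRel (· ≤ ·) x y := by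
    rw [le_antisymm_iff, hP, hP, ← le_antisymm_iff, maxLastKey_eq_iff]
  obtain ⟨x₀, hx₀⟩ := Finite.exists_max (maxLastKey (α := α))
  have hx₀max : IsMax x₀ := fun y hy ↦ by
    by_contra hyx
    exact (hx₀ y).not_gt (maxLastKey_strictMono (lt_of_le_not_ge hy hyx))
  obtain ⟨m, hm, hmin⟩ :=
    Finset.exists_min_image {x | IsMax x} maxLastKey ⟨x₀, by simpa using hx₀max⟩
  simp only [Finset.mem_filter, Finset.mem_univ, true_and] at hm hmin
  refine ⟨l, P m, P, hsurj, (P m).2, fun x y hxy ↦ ?_, fun x y hxy ↦ ?_, hPeq, fun x ↦ ?_⟩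
  · by_cases hyx : y ≤ x
    · exact ((hPeq x y).mpr ⟨hxy, hyx⟩).le
    · exact ((hPlt x y).mpr (maxLastKey_strictMono (lt_of_le_not_ge hxy hyx))).le
  · exact (hPlt x y).mpr (maxLastKey_strictMono hxy)
  · rw [← Fin.le_def, hP]
    exact ⟨hm.of_maxLastKey_le, hmin x⟩

end Rank

section Relation

variable {α : Type*}

abbrev Relation.reflGenPreorder (r : α → α → Prop) [IsTrans α r] : Preorder α where
  le := ReflGen r
  le_refl _ := .refl
  le_trans _ _ _ hab hbc := by
    rcases hab with _ | hab <;> rcases hbc with _ | hbc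
    exacts [.refl, .single hbc, .single hab, .single (_root_.trans hab hbc)]

theorem Relation.ReflGen.rel_of_rel_of_reflGen {r : α → α → Prop} [IsTrans α r] {a b c d : α}
    (hab : ReflGen r a b) (hbc : r b c) (hcd : ReflGen r c d) : r a d := by
  rcases hab with _ | hab <;> rcases hcd with _ | hcd
  exacts [hbc, _root_.trans hbc hcd, _root_.trans hab hbc,
    _root_.trans (_root_.trans hab hbc) hcd]

end Relation

theorem Function.exists_iterate_iterate_eq {α : Type*} [Finite α] (f : α → α) (x : α) :
    ∃ p, 0 < p ∧ f^[p] (f^[p] x) = f^[p] x := by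
  obtain ⟨a, b, hab, hfab⟩ := Set.Finite.exists_lt_map_eq_of_forall_mem (f := (f^[·] x))
    (fun _ ↦ Set.mem_univ _) Set.finite_univ
  have hper : IsPeriodicPt f (b - a) (f^[a] x) := by
    rw [IsPeriodicPt, IsFixedPt, ← iterate_add_apply, Nat.sub_add_cancel hab.le]
    exact hfab.symm
  obtain ⟨k, hk⟩ : ∃ k, (a + 1) * (b - a) = k + a :=
    ⟨(a + 1) * (b - a) - a, by rw [Nat.sub_add_cancel]; nlinarith [Nat.sub_pos_of_lt hab]⟩
  refine ⟨(a + 1) * (b - a), Nat.mul_pos a.succ_pos (Nat.sub_pos_of_lt hab), ?_⟩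
  have hp : f^[(a + 1) * (b - a)] (f^[a] x) = f^[a] x := hper.const_mul (a + 1)
  have hx : f^[(a + 1) * (b - a)] x = f^[k] (f^[a] x) := by rw [hk, iterate_add_apply]
  rw [hx, (Commute.iterate_iterate_self f _ k).eq, hp]

namespace Matrix

variable {l m n R : Type*} [Fintype m] [CommSemiring R] [PartialOrder R]
  [CanonicallyOrderedAdd R] [NoZeroDivisors R]

theorem pos_mul_apply_iff (B : Matrix l m R) (C : Matrix m n R) (x : l) (y : n) :
    0 < (B * C) x y ↔ ∃ z, 0 < B x z ∧ 0 < C z y := by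
  simp [mul_apply, Finset.sum_pos_iff]

variable [Fintype n] [DecidableEq n]

theorem exists_pos_pow_apply (M : Matrix n n R) (hcol : ∀ j, ∃ i, M i j ≠ 0) (k : ℕ) (j : n) :
    ∃ i, 0 < (M ^ k) i j := by
  induction k generalizing j with
  | zero =>
    obtain ⟨i, hij⟩ := hcol j
    have : Nontrivial R := nontrivial_of_ne _ _ hij
    exact ⟨j, by simp⟩
  | succ k ih =>
    obtain ⟨z, hz⟩ := hcol j
    obtain ⟨i, hi⟩ := ih z
    exact ⟨i, by rw [pow_succ, pos_mul_apply_iff]; exact ⟨z, hi, pos_iff_ne_zero.mpr hz⟩⟩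

theorem exists_pow_isTrans_pos (M : Matrix n n R) :
    ∃ p, 0 < p ∧ IsTrans n fun x y ↦ 0 < (M ^ p) y x := by
  let supp (k : ℕ) (x y : n) : Prop := 0 < (M ^ k) x y
  let step (S : n → n → Prop) (x y : n) : Prop := ∃ z, S x z ∧ 0 < M z y
  have hsupp (k : ℕ) : supp k = step^[k] (supp 0) := by
    induction k with
    | zero => rfl
    | succ k ih =>
      rw [iterate_succ_apply', ← ih]
      ext x y
      simp [supp, step, pow_succ, pos_mul_apply_iff]
  obtain ⟨p, hp, hfix⟩ := exists_iterate_iterate_eq step (supp 0)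
  have hidem : supp (p + p) = supp p := by rw [hsupp (p + p), hsupp p, iterate_add_apply, hfix]
  refine ⟨p, hp, ⟨fun x y z hxy hyz ↦ ?_⟩⟩
  have hzx : supp (p + p) z x := by
    simp only [supp, pow_add, pos_mul_apply_iff]
    exact ⟨y, hyz, hxy⟩
  rwa [hidem] at hzx

end Matrix

theorem matPrimitive_of_pos {n : Type*} [Fintype n] [DecidableEq n] {N : Matrix n n ℕ}
    (h : ∀ i j, 0 < N i j) : MatPrimitive N :=
  ⟨1, one_pos, by simpa using h⟩

theorem Matrix.diagBlock_eq_zero_or_matPrimitive {A ι : Type*} [Fintype A] [DecidableEq A]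
    [DecidableEq ι] (E : Matrix A A ℕ) [IsTrans A fun x y ↦ 0 < E y x] (P : A → ι)
    (hP : ∀ x y, P x = P y → ReflGen (fun x y ↦ 0 < E y x) x y) (i : ι) :
    (∀ r c : {x // P x = i}, E r.1 c.1 = 0) ∨
      MatPrimitive (Matrix.of fun r c : {x // P x = i} ↦ E r.1 c.1) := by
  by_cases h : ∃ r c : {x // P x = i}, 0 < E r.1 c.1
  · obtain ⟨b, a, hab⟩ := h
    refine Or.inr (matPrimitive_of_pos fun r c ↦ ?_)
    exact (hP c a (c.2.trans a.2.symm)).rel_of_rel_of_reflGen hab (hP b r (b.2.trans r.2.symm))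
  · push Not at h
    exact Or.inl fun r c ↦ Nat.le_zero.mp (h r c)

theorem stmt0 {A : Type*} [Fintype A] [DecidableEq A] [Nonempty A] (M : Matrix A A ℕ)
    (hcol : ∀ j : A, ∃ i : A, M i j ≠ 0) :
    ∃ (p q l : ℕ) (P : A → Fin l), 0 < p ∧ q + 1 ≤ l ∧ Function.Surjective P ∧
      -- lower block-triangular: letters in row-group strictly below column-group give zero entries
      (∀ r c : A, P r < P c → (M ^ p) r c = 0) ∧
      -- diagonal blocks of non-principal components are primitive or zero
      (∀ i : Fin l, (i : ℕ) < q →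
        ((∀ r c : {x // P x = i}, (M ^ p) r.1 c.1 = 0) ∨
          MatPrimitive (Matrix.of fun r c : {x // P x = i} => (M ^ p) r.1 c.1))) ∧
      -- diagonal blocks of principal components are primitive
      (∀ i : Fin l, q ≤ (i : ℕ) →
        MatPrimitive (Matrix.of fun r c : {x // P x = i} => (M ^ p) r.1 c.1)) ∧
      -- off-diagonal blocks between two distinct principal components vanish
      (∀ r c : A, q ≤ ((P r) : ℕ) → q ≤ ((P c) : ℕ) → P r ≠ P c → (M ^ p) r c = 0) ∧
      -- every non-principal component feeds into some strictly later component
      (∀ i : Fin l, (i : ℕ) < q → ∃ r c : A, P c = i ∧ i < P r ∧ (M ^ p) r c ≠ 0) := by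
  obtain ⟨p, hp, htrans⟩ := M.exists_pow_isTrans_pos
  let : Preorder A := reflGenPreorder fun x y ↦ 0 < (M ^ p) y x
  obtain ⟨l, q, P, hsurj, hql, hmono, hstrict, hPeq, hPq⟩ :=
    Fintype.exists_fin_rank_maxLast (α := A)
  have hdiag := (M ^ p).diagBlock_eq_zero_or_matPrimitive P fun x y h ↦ ((hPeq x y).mp h).1
  have hclosed (r c : A) (hc : q ≤ (P c : ℕ)) (hrc : 0 < (M ^ p) r c) : P r = P c :=
    (hPeq r c).mpr ⟨(hPq c).mp hc (.single hrc), .single hrc⟩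
  refine ⟨p, q, l, P, hp, hql, hsurj, fun r c hlt ↦ ?_, fun i _ ↦ hdiag i, fun i hi ↦ ?_,
    fun r c _ hc hne ↦ ?_, fun i hi ↦ ?_⟩
  · by_contra h
    exact (hmono (ReflGen.single (Nat.pos_of_ne_zero h))).not_gt hlt
  · obtain ⟨c, rfl⟩ := hsurj i
    obtain ⟨r, hr⟩ := M.exists_pos_pow_apply hcol p c
    exact (hdiag (P c)).resolve_left fun h0 ↦ hr.ne' (h0 ⟨r, hclosed r c hi hr⟩ ⟨c, rfl⟩)
  · by_contra h
    exact hne (hclosed r c hc (Nat.pos_of_ne_zero h))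
  · obtain ⟨c, rfl⟩ := hsurj i
    obtain ⟨r, hcr⟩ := not_isMax_iff.mp (mt (hPq c).mpr (not_le.mpr hi))
    obtain _ | hrc := hcr.le
    · exact absurd le_rfl hcr.not_ge
    · exact ⟨r, c, rfl, hstrict hcr, hrc.ne'⟩
end

section
/- Let A be a finite alphabet and L ⊆ A* a factorial language. Suppose there exists a positive integer k such that infinitely many words of L contain no occurrence of a k-th power of a nonempty word. Then there exists an infinite sequence y ∈ A^ℕ with bounded word powers (i.e., there is a positive integer k' such that u^{k'} is a factor of y only if u is empty) such that every factor of y belongs to L. -/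
/-!
König's lemma: the `k`-power-free words of `L` form an infinite factor-closed language over a
finite alphabet, so there is an infinite chain of prefixes `w₀ <+: w₁ <+: ⋯` each of which has
infinitely many extensions in that language; their limit `y` has all its factors there.
-/

/-- `u` is a factor (contiguous subword) of `w`. -/
def Fac {α : Type*} (u w : List α) : Prop := ∃ s t : List α, w = s ++ u ++ t

/-- `k`-th power of a word. -/
def listPow {α : Type*} (u : List α) (k : ℕ) : List α := (List.replicate k u).flatten

/-- The window of length `n` of the sequence `y` starting at position `m`. -/
def window {α : Type*} (y : ℕ → α) (m n : ℕ) : List α := List.ofFn fun i : Fin n => y (m + i)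

/-- `u` is a finite factor of the infinite sequence `y`. -/
def FacSeq {α : Type*} (u : List α) (y : ℕ → α) : Prop := ∃ m n : ℕ, u = window y m n

section

variable {α : Type*}

theorem Fac.refl (u : List α) : Fac u u := ⟨[], [], by simp⟩

theorem Fac.trans {a b c : List α} (hab : Fac a b) (hbc : Fac b c) : Fac a c := by
  obtain ⟨s, t, rfl⟩ := hab
  obtain ⟨s', t', rfl⟩ := hbc
  exact ⟨s' ++ s, t ++ t', by simp⟩

theorem window_add (y : ℕ → α) (m n p : ℕ) :
    window y m (n + p) = window y m n ++ window y (m + n) p := by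
  simp only [window, List.ofFn_add, Fin.val_castLE, Fin.val_natAdd, Nat.add_assoc]

theorem FacSeq.exists_fac_window_zero {u : List α} {y : ℕ → α} (h : FacSeq u y) :
    ∃ n, Fac u (window y 0 n) := by
  obtain ⟨m, n, rfl⟩ := h
  exact ⟨m + n, window y 0 m, [], by rw [window_add, Nat.zero_add, List.append_nil]⟩

theorem exists_seq_forall_window_zero {P : List α → Prop} (h0 : P [])
    (hstep : ∀ w, P w → ∃ a, P (w ++ [a])) : ∃ y : ℕ → α, ∀ n, P (window y 0 n) := by
  choose next hnext using hstep
  let g : ℕ → {w // P w} := fun n => (fun w => ⟨w.1 ++ [next w.1 w.2], hnext w.1 w.2⟩)^[n] ⟨[], h0⟩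
  let y : ℕ → α := fun n => next (g n).1 (g n).2
  have hg : ∀ n, (g n).1 = window y 0 n := by
    intro n
    induction n with
    | zero => rfl
    | succ n ih =>
      rw [window_add, ← ih]
      simp only [g, Function.iterate_succ_apply']
      simp [window, y, g]
  exact ⟨y, fun n => hg n ▸ (g n).2⟩

/-- Factor-closed languages are what the literature calls factorial. -/
def FactorClosed (S : Set (List α)) : Prop := ∀ u w, w ∈ S → Fac u w → u ∈ S

theorem FactorClosed.sep_powerFree {L : Set (List α)} (hL : FactorClosed L) (k : ℕ) :
    FactorClosed {w ∈ L | ∀ u : List α, u ≠ [] → ¬ Fac (listPow u k) w} := by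
  rintro u w ⟨hwL, hw⟩ huw
  exact ⟨hL u w hwL huw, fun v hv hvu => hw v hv (hvu.trans huw)⟩

def extensionsIn (S : Set (List α)) (w : List α) : Set (List α) := {v ∈ S | w <+: v}

theorem extensionsIn_nil (S : Set (List α)) : extensionsIn S [] = S := by
  ext v
  simp [extensionsIn]

theorem exists_extensionsIn_append_infinite [Finite α] {S : Set (List α)} {w : List α}
    (hw : (extensionsIn S w).Infinite) : ∃ a, (extensionsIn S (w ++ [a])).Infinite := by
  by_contra! hfin
  refine hw (((List.finite_length_le α w.length).union (Set.finite_iUnion hfin)).subset ?_)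
  rintro v ⟨hvS, t, rfl⟩
  rcases t with _ | ⟨a, t⟩
  · left
    simp
  · right
    exact Set.mem_iUnion.2 ⟨a, hvS, t, by simp⟩

theorem FactorClosed.exists_seq_forall_facSeq_mem [Finite α] {S : Set (List α)}
    (hS : FactorClosed S) (hinf : S.Infinite) : ∃ y : ℕ → α, ∀ u, FacSeq u y → u ∈ S := by
  obtain ⟨y, hy⟩ := exists_seq_forall_window_zero (P := fun w => (extensionsIn S w).Infinite)
    (by rwa [extensionsIn_nil]) fun w hw => exists_extensionsIn_append_infinite hw
  refine ⟨y, fun u hu => ?_⟩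
  obtain ⟨n, hun⟩ := hu.exists_fac_window_zero
  obtain ⟨v, hvS, t, rfl⟩ := (hy n).nonempty
  exact hS u _ hvS (hun.trans ⟨[], t, by simp⟩)

end

theorem stmt1 {A : Type*} [Fintype A] (L : Set (List A))
    (hfact : ∀ u w : List A, w ∈ L → Fac u w → u ∈ L)
    (h : ∃ k : ℕ, 0 < k ∧
      {w ∈ L | ∀ u : List A, u ≠ [] → ¬ Fac (listPow u k) w}.Infinite) :
    ∃ y : ℕ → A,
      (∃ k' : ℕ, 0 < k' ∧ ∀ u : List A, u ≠ [] → ¬ FacSeq (listPow u k') y) ∧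
      ∀ u : List A, FacSeq u y → u ∈ L := by
  obtain ⟨k, hk, hinf⟩ := h
  obtain ⟨y, hy⟩ := (FactorClosed.sep_powerFree hfact k).exists_seq_forall_facSeq_mem hinf
  refine ⟨y, ⟨k, hk, fun u hu hfac => ?_⟩, fun u hu => (hy u hu).1⟩
  exact (hy _ hfac).2 u hu (Fac.refl _)
end

section
/- Suppose a substitution (σ, A, a) projects onto a substitution (τ, B, b) via a letter-to-letter morphism φ, and suppose every letter of B occurs in the fixed point y of τ. Then the dominant eigenvalues of the incidence matrices M_σ and M_τ are equal. -/
/-- Apply a substitution (given on letters) to a word. -/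
def Subst.apply {A : Type*} (σ : A → List A) (w : List A) : List A := (w.map σ).flatten

/-- `x` is the fixed point of the substitution `σ` starting at the letter `a`. -/
def IsFixedPointSeq {A : Type*} (σ : A → List A) (a : A) (x : ℕ → A) : Prop :=
  (∀ N : ℕ, ∃ n : ℕ, N ≤ ((Subst.apply σ)^[n] [a]).length) ∧
  ∀ (n i : ℕ) (h : i < ((Subst.apply σ)^[n] [a]).length),
    ((Subst.apply σ)^[n] [a]).get ⟨i, h⟩ = x i

/-- Incidence matrix of a substitution: entry `(i, j)` counts occurrences of `i` in `σ j`. -/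
noncomputable def IncMat {A : Type*} [Fintype A] [DecidableEq A] (σ : A → List A) :
    Matrix A A ℝ := Matrix.of fun i j => ((σ j).count i : ℝ)

/-- `α` is the dominant (Perron) eigenvalue of the real matrix `M`. -/
def IsDomEig {n : Type*} [Fintype n] [DecidableEq n] (M : Matrix n n ℝ) (α : ℝ) : Prop :=
  Module.End.HasEigenvalue (Matrix.toLin' M) α ∧
  ∀ μ : ℂ, Module.End.HasEigenvalue (Matrix.toLin' (M.map Complex.ofReal)) μ →
    ‖μ‖ ≤ α

/-! The `ℓ∞` operator norm of `(M_σ ^ n)ᵀ` is the largest column sum of `M_σ ^ n`, i.e. the length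
of the longest word `σⁿ(c)`. Since `φ` intertwines σ and τ, `|σⁿ(c)| = |τⁿ(φ c)|`, and `φ` is onto
because every letter of `B` occurs in `y`, whose prefixes are `φ`-images of the words `σⁿ(a)`.
Hence these norms coincide for σ and τ, Gelfand's formula gives equal spectral radii, and the
spectral radius of a matrix is its dominant eigenvalue. -/

open Matrix Function

attribute [local instance] Matrix.linftyOpNormedRing Matrix.linftyOpNormedAlgebra

lemma List.sum_count_eq_length {A : Type*} [Fintype A] [DecidableEq A] (l : List A) :
    ∑ i, l.count i = l.length := by
  rw [← List.sum_toFinset_count_eq_length]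
  exact (Finset.sum_subset (Finset.subset_univ _) fun i _ hi =>
    List.count_eq_zero_of_not_mem (by simpa using hi)).symm

namespace Subst

variable {A B : Type*}

lemma count_apply [Fintype A] [DecidableEq A] (σ : A → List A) (w : List A) (i : A) :
    (apply σ w).count i = ∑ j, w.count j * (σ j).count i := by
  rw [show apply σ w = w.flatMap σ from rfl, List.count_flatMap, Finset.sum_list_map_count]
  refine Finset.sum_subset (Finset.subset_univ _) fun j _ hj => ?_
  simp [List.count_eq_zero_of_not_mem (by simpa using hj)]

lemma semiconj_map {σ : A → List A} {τ : B → List B} {φ : A → B}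
    (h : ∀ c, (σ c).map φ = τ (φ c)) : Semiconj (List.map φ) (apply σ) (apply τ) := fun w => by
  simp [apply, List.map_flatten, comp_def, h]

lemma length_iterate_apply_of_map_eq {σ : A → List A} {τ : B → List B} {φ : A → B}
    (h : ∀ c, (σ c).map φ = τ (φ c)) (n : ℕ) (c : A) :
    ((apply σ)^[n] [c]).length = ((apply τ)^[n] [φ c]).length := by
  rw [← List.length_map φ, (semiconj_map h).iterate_right n [c], List.map_singleton]

end Subst

lemma IsFixedPointSeq.exists_mem_iterate {A : Type*} {σ : A → List A} {a : A} {x : ℕ → A}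
    (hx : IsFixedPointSeq σ a x) (i : ℕ) : ∃ n, x i ∈ (Subst.apply σ)^[n] [a] := by
  obtain ⟨n, hn⟩ := hx.1 (i + 1)
  exact ⟨n, hx.2 n i hn ▸ List.get_mem _ _⟩

lemma incMat_pow_apply {A : Type*} [Fintype A] [DecidableEq A] (σ : A → List A) (n : ℕ)
    (i c : A) : (IncMat σ ^ n) i c = ((Subst.apply σ)^[n] [c]).count i := by
  induction n generalizing i with
  | zero => by_cases h : i = c <;> simp [one_apply, h, Ne.symm]
  | succ n ih =>
    rw [pow_succ', mul_apply, iterate_succ_apply', Subst.count_apply]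
    push_cast
    exact Finset.sum_congr rfl fun j _ => by rw [ih, IncMat, of_apply, mul_comm]

namespace Matrix

variable {n : Type*} [Fintype n] [DecidableEq n]

lemma spectrum_transpose {K : Type*} [Field K] (M : Matrix n n K) :
    spectrum K Mᵀ = spectrum K M := by
  ext μ
  simp only [mem_spectrum_iff_isRoot_charpoly, charpoly_transpose]

lemma mem_spectrum_map {K L : Type*} [Field K] [Field L] (f : K →+* L) {M : Matrix n n K}
    {μ : K} (h : μ ∈ spectrum K M) : f μ ∈ spectrum L (M.map f) := by
  rw [mem_spectrum_iff_isRoot_charpoly, charpoly_map] at *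
  exact h.map

lemma hasEigenvalue_toLin'_iff_mem_spectrum {K : Type*} [Field K] {M : Matrix n n K} {μ : K} :
    Module.End.HasEigenvalue (toLin' M) μ ↔ μ ∈ spectrum K M := by
  rw [Module.End.hasEigenvalue_iff_mem_spectrum, spectrum_toLin']

end Matrix

namespace IsDomEig

variable {n : Type*} [Fintype n] [DecidableEq n] {M : Matrix n n ℝ} {α : ℝ}

lemma ofReal_mem_spectrum (h : IsDomEig M α) :
    (α : ℂ) ∈ spectrum ℂ (M.map Complex.ofReal) :=
  mem_spectrum_map Complex.ofRealHom (hasEigenvalue_toLin'_iff_mem_spectrum.mp h.1)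

lemma nonneg (h : IsDomEig M α) : 0 ≤ α :=
  (norm_nonneg _).trans (h.2 α (hasEigenvalue_toLin'_iff_mem_spectrum.mpr h.ofReal_mem_spectrum))

lemma spectralRadius_eq (h : IsDomEig M α) :
    spectralRadius ℂ (M.map Complex.ofReal)ᵀ = ENNReal.ofReal α := by
  rw [spectralRadius, spectrum_transpose]
  refine le_antisymm (iSup₂_le fun μ hμ => ?_) (le_iSup₂_of_le _ h.ofReal_mem_spectrum ?_)
  · rw [← enorm_eq_nnnorm, ← ofReal_norm]
    exact ENNReal.ofReal_le_ofReal (h.2 μ (hasEigenvalue_toLin'_iff_mem_spectrum.mpr hμ))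
  · rw [← enorm_eq_nnnorm, ← ofReal_norm, Complex.norm_real, Real.norm_of_nonneg h.nonneg]

end IsDomEig

lemma spectralRadius_eq_of_nnnorm_pow_eq {A B : Type*} [NormedRing A] [NormedAlgebra ℂ A]
    [CompleteSpace A] [NormedRing B] [NormedAlgebra ℂ B] [CompleteSpace B] {a : A} {b : B}
    (h : ∀ n : ℕ, ‖a ^ n‖₊ = ‖b ^ n‖₊) : spectralRadius ℂ a = spectralRadius ℂ b :=
  tendsto_nhds_unique
    (by simpa only [h] using spectrum.pow_nnnorm_pow_one_div_tendsto_nhds_spectralRadius a)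
    (spectrum.pow_nnnorm_pow_one_div_tendsto_nhds_spectralRadius b)

lemma nnnorm_transpose_incMat_pow {A : Type*} [Fintype A] [DecidableEq A] (σ : A → List A)
    (m : ℕ) : ‖((IncMat σ).map Complex.ofReal)ᵀ ^ m‖₊
      = Finset.univ.sup fun c => (((Subst.apply σ)^[m] [c]).length : NNReal) := by
  have hpow : (IncMat σ).map Complex.ofReal ^ m = (IncMat σ ^ m).map Complex.ofReal :=
    ((IncMat σ).map_pow Complex.ofRealHom m).symm
  rw [← transpose_pow, hpow, linfty_opNNNorm_def]
  refine Finset.sup_congr rfl fun c _ => ?_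
  simp [incMat_pow_apply, ← Nat.cast_sum, List.sum_count_eq_length]

theorem stmt6_general {A B : Type*} [Fintype A] [DecidableEq A] [Fintype B] [DecidableEq B]
    (σ : A → List A) (τ : B → List B) (a : A) (b : B) (φ : A → B)
    (hφa : φ a = b) (hcomm : ∀ c : A, List.map φ (σ c) = τ (φ c))
    (y : ℕ → B) (hy : IsFixedPointSeq τ b y)
    (hyfull : ∀ d : B, ∃ i : ℕ, y i = d)
    (α β : ℝ) (hα : IsDomEig (IncMat σ) α) (hβ : IsDomEig (IncMat τ) β) :
    α = β := by
  have hsurj : Surjective φ := fun d => by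
    obtain ⟨i, rfl⟩ := hyfull d
    obtain ⟨n, hn⟩ := hy.exists_mem_iterate i
    rw [← hφa, ← List.map_singleton, ← (Subst.semiconj_map hcomm).iterate_right n] at hn
    obtain ⟨c, -, hc⟩ := List.mem_map.mp hn
    exact ⟨c, hc⟩
  have hnorm (m : ℕ) : ‖((IncMat σ).map Complex.ofReal)ᵀ ^ m‖₊
      = ‖((IncMat τ).map Complex.ofReal)ᵀ ^ m‖₊ := by
    rw [nnnorm_transpose_incMat_pow, nnnorm_transpose_incMat_pow,
      ← Finset.image_univ_of_surjective hsurj, Finset.sup_image]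
    simp only [comp_def, Subst.length_iterate_apply_of_map_eq hcomm]
  have hρ := spectralRadius_eq_of_nnnorm_pow_eq hnorm
  rwa [hα.spectralRadius_eq, hβ.spectralRadius_eq,
    ENNReal.ofReal_eq_ofReal_iff hα.nonneg hβ.nonneg] at hρ

theorem stmt6 {A B : Type*} [Fintype A] [DecidableEq A] [Fintype B] [DecidableEq B]
    (σ : A → List A) (τ : B → List B) (a : A) (b : B) (φ : A → B)
    (hσa : ∃ u : List A, σ a = a :: u) (hτb : ∃ u : List B, τ b = b :: u)
    (hφa : φ a = b) (hcomm : ∀ c : A, List.map φ (σ c) = τ (φ c))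
    (y : ℕ → B) (hy : IsFixedPointSeq τ b y)
    (hyfull : ∀ d : B, ∃ i : ℕ, y i = d)
    (α β : ℝ) (hα : IsDomEig (IncMat σ) α) (hβ : IsDomEig (IncMat τ) β) :
    α = β :=
  stmt6_general σ τ a b φ hφa hcomm y hy hyfull α β hα hβ
end

section
/- There exists a non-primitive substitution that projects onto a primitive substitution. Concretely: let σ on {a,b,c} be defined by σ(a)=ab, σ(b)=c, σ(c)=cb, let τ on {0,1} be defined by τ(0)=01, τ(1)=0, and let φ(a)=0, φ(b)=1, φ(c)=0. Then φ∘σ = τ∘φ on letters, φ(a)=0, τ is primitive, and σ is not primitive. -/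
/-- A substitution is primitive if some iterate maps every letter to a word containing
every letter. -/
def Primitive {A : Type*} (σ : A → List A) : Prop :=
  ∃ n : ℕ, 0 < n ∧ ∀ c d : A, d ∈ (Subst.apply σ)^[n] [c]

theorem stmt7 :
    ∃ (σ : Fin 3 → List (Fin 3)) (τ : Fin 2 → List (Fin 2)) (φ : Fin 3 → Fin 2),
      σ 0 = [0, 1] ∧ σ 1 = [2] ∧ σ 2 = [2, 1] ∧
      τ 0 = [0, 1] ∧ τ 1 = [0] ∧
      φ 0 = 0 ∧ φ 1 = 1 ∧ φ 2 = 0 ∧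
      (∀ c : Fin 3, List.map φ (σ c) = τ (φ c)) ∧
      Primitive τ ∧ ¬ Primitive σ := by
  refine ⟨![[0,1],[2],[2,1]], ![[0,1],[0]], ![0,1,0], rfl, rfl, rfl, rfl, rfl, rfl, rfl, rfl,
    by decide, ⟨2, by norm_num, by decide⟩, ?_⟩
  rintro ⟨n, hn, h⟩
  have key : ∀ m, ∀ x ∈ (Subst.apply ![[0,1],[2],[2,1]])^[m] [1], x ≠ (0 : Fin 3) := by
    intro m
    induction m with
    | zero => decide
    | succ k ih =>
      intro x hx
      rw [Function.iterate_succ_apply'] at hx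
      rcases List.mem_flatten.1 hx with ⟨l, hl, hxl⟩
      rcases List.mem_map.1 hl with ⟨d, hd, rfl⟩
      have hd0 := ih d hd
      fin_cases d
      · exact absurd rfl hd0
      · simp_all
      · simp_all
        rcases hxl with rfl | rfl <;> decide
  exact key n 0 (h 1 0) rfl
end

section
/- Let τ : B → B* be a substitution whose incidence matrix M is in the block lower-triangular form of the primitive-component decomposition with l components (no column of M is zero, diagonal blocks are primitive-or-zero for non-principal components and primitive with strictly positive entries for principal components, and every non-principal component maps into some later component). Then for every letter e ∈ B, the word τ^{2l}(e) contains an occurrence of a letter belonging to a principal primitive component of B. -/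
lemma Subst.mem_apply {A : Type*} (σ : A → List A) (w : List A) (d : A) :
    d ∈ Subst.apply σ w ↔ ∃ c ∈ w, d ∈ σ c := by
  simp [Subst.apply]

lemma Subst.mem_iter_mono {A : Type*} (σ : A → List A) :
    ∀ n (w : List A) (d e : A), d ∈ w → e ∈ (Subst.apply σ)^[n] [d] →
      e ∈ (Subst.apply σ)^[n] w := by
  intro n
  induction n with
  | zero => intro w d e hd he; simp at he; simpa [he]
  | succ n ih =>
    intro w d e hd he
    rw [Function.iterate_succ_apply'] at he ⊢
    rw [Subst.mem_apply] at he ⊢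
    obtain ⟨c, hc, hec⟩ := he
    exact ⟨c, ih w d c hd hc, hec⟩

lemma Subst.mem_iter_comp {A : Type*} (σ : A → List A) (n m : ℕ) (d e f : A)
    (h1 : e ∈ (Subst.apply σ)^[n] [d]) (h2 : f ∈ (Subst.apply σ)^[m] [e]) :
    f ∈ (Subst.apply σ)^[n + m] [d] := by
  rw [Nat.add_comm, Function.iterate_add_apply]
  exact Subst.mem_iter_mono σ m _ e f h1 h2

theorem stmt8 {B : Type*} [Fintype B] (τ : B → List B) (l q : ℕ) (P : B → Fin l)
    (hq : q + 1 ≤ l) (hP : Function.Surjective P)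
    -- no column of the incidence matrix is zero
    (hcol : ∀ c : B, τ c ≠ [])
    -- block lower-triangular form: letters produced from a component lie in later-or-equal components
    (htri : ∀ c d : B, d ∈ τ c → P c ≤ P d)
    -- diagonal blocks of non-principal components are zero or strictly positive
    (hdiag0 : ∀ i : Fin l, (i : ℕ) < q →
      (∀ c d : B, P c = i → P d = i → d ∉ τ c) ∨ (∀ c d : B, P c = i → P d = i → d ∈ τ c))
    -- diagonal blocks of principal components are strictly positive
    (hdiag1 : ∀ i : Fin l, q ≤ (i : ℕ) → ∀ c d : B, P c = i → P d = i → d ∈ τ c)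
    -- blocks between two distinct principal components vanish
    (hprinc : ∀ c d : B, q ≤ ((P c) : ℕ) → q ≤ ((P d) : ℕ) → P c ≠ P d → d ∉ τ c)
    -- every non-principal component maps into some strictly later component
    (hlink : ∀ i : Fin l, (i : ℕ) < q → ∃ c d : B, P c = i ∧ i < P d ∧ d ∈ τ c) :
    ∀ e : B, ∃ d : B, d ∈ (Subst.apply τ)^[2 * l] [e] ∧ q ≤ ((P d) : ℕ) := by
  -- self-membership for principal letters
  have hself : ∀ (e : B), q ≤ ((P e) : ℕ) → ∀ n, e ∈ (Subst.apply τ)^[n] [e] := by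
    intro e he n
    induction n with
    | zero => simp
    | succ n ih =>
      rw [Function.iterate_succ_apply', Subst.mem_apply]
      exact ⟨e, ih, hdiag1 (P e) he e e rfl rfl⟩
  -- two-step increase for non-principal letters
  have hstep : ∀ (e : B), ((P e) : ℕ) < q →
      ∃ d : B, d ∈ (Subst.apply τ)^[2] [e] ∧ P e < P d := by
    intro e he
    rcases hdiag0 (P e) he with h0 | h1
    · obtain ⟨d, hd⟩ := List.exists_mem_of_ne_nil _ (hcol e)
      obtain ⟨d', hd'⟩ := List.exists_mem_of_ne_nil _ (hcol d)
      have hlt : P e < P d := lt_of_le_of_ne (htri e d hd)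
        (fun h => h0 e d rfl h.symm hd)
      refine ⟨d', ?_, lt_of_lt_of_le hlt (htri d d' hd')⟩
      rw [show (2 : ℕ) = 1 + 1 from rfl]
      refine Subst.mem_iter_comp τ 1 1 e d d' ?_ ?_ <;>
        simp [Subst.mem_apply, hd, hd']
    · obtain ⟨c, d, hc, hcd, hd⟩ := hlink (P e) he
      refine ⟨d, ?_, hc ▸ hcd⟩
      have hc' : c ∈ τ e := h1 e c rfl hc
      rw [show (2 : ℕ) = 1 + 1 from rfl]
      refine Subst.mem_iter_comp τ 1 1 e c d ?_ ?_ <;>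
        simp [Subst.mem_apply, hc', hd]
  -- main induction on fuel
  have main : ∀ k (e : B), l ≤ ((P e) : ℕ) + k →
      ∃ d : B, d ∈ (Subst.apply τ)^[2 * k] [e] ∧ q ≤ ((P d) : ℕ) := by
    intro k
    induction k with
    | zero => intro e he; exact absurd (P e).isLt (by omega)
    | succ k ih =>
      intro e he
      by_cases hpe : q ≤ ((P e) : ℕ)
      · exact ⟨e, hself e hpe _, hpe⟩
      · push_neg at hpe
        obtain ⟨d, hd, hlt⟩ := hstep e hpe
        obtain ⟨d', hd', hq'⟩ := ih d (by have := Fin.lt_iff_val_lt_val.mp hlt; omega)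
        refine ⟨d', ?_, hq'⟩
        have := Subst.mem_iter_comp τ 2 (2 * k) e d d' hd hd'
        have h2 : 2 * (k + 1) = 2 + 2 * k := by ring
        rwa [h2]
  intro e
  exact main l e (by omega)
end
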